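/- Block-tiling lower bound for the number of compatible configurations: for all n, m ≥ 1 and all k ≥ 1, the number of compatible configurations on the rectangle Λ_{k(n+1), k(m+1)} satisfies |X_{Λ_{k(n+1),k(m+1)}}| ≥ |M_{Λ_{n,m}}|^{k²}. -/

import Mathlib

/-- Adjacency in the triangular lattice, modeled on `ℤ × ℤ`. -/
def TriAdj (u v : ℤ × ℤ) : Prop :=
  (u.1 - v.1, u.2 - v.2) ∈
    ({(1, 0), (-1, 0), (0, 1), (0, -1), (1, -1), (-1, 1)} : Finset (ℤ × ℤ))

/-- A set of sites is independent if no two of its elements are adjacent. -/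
def IsIndependent (S : Set (ℤ × ℤ)) : Prop :=
  ∀ u ∈ S, ∀ v ∈ S, ¬ TriAdj u v

/-- Maximal independent set of the triangular lattice. -/
def IsMIS (S : Set (ℤ × ℤ)) : Prop :=
  IsIndependent S ∧ ∀ u ∉ S, ∃ v ∈ S, TriAdj u v

/-- The box `{a,…,b} × {c,…,d} ⊆ ℤ²`. -/
def Box (a b c d : ℤ) : Set (ℤ × ℤ) :=
  {p | a ≤ p.1 ∧ p.1 ≤ b ∧ c ≤ p.2 ∧ p.2 ≤ d}

/-- The rectangle `Λ_{n,m} = {1,…,n} × {1,…,m}`. -/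
def Rect (n m : ℤ) : Set (ℤ × ℤ) := Box 1 n 1 m

/-- `T` is a maximal configuration on the region `Λ`: `T ⊆ Λ`, `T` is
independent, and every site of `Λ \ T` has a neighbor in `T`. -/
def IsMaxConfig (Λ T : Set (ℤ × ℤ)) : Prop :=
  T ⊆ Λ ∧ IsIndependent T ∧ ∀ u ∈ Λ \ T, ∃ v ∈ T, TriAdj u v

/-- `T` is a compatible configuration on the region `Λ`: it is the restriction
to `Λ` of some maximal independent set of the whole lattice. -/
def IsCompatConfig (Λ T : Set (ℤ × ℤ)) : Prop :=
  ∃ S : Set (ℤ × ℤ), IsMIS S ∧ S ∩ Λ = T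

/-- The set of maximal configurations on the region `Λ`. -/
def MaxConfigs (Λ : Set (ℤ × ℤ)) : Set (Set (ℤ × ℤ)) := {T | IsMaxConfig Λ T}

/-- The set of compatible configurations on the region `Λ`. -/
def CompatConfigs (Λ : Set (ℤ × ℤ)) : Set (Set (ℤ × ℤ)) := {T | IsCompatConfig Λ T}

/-!
Put `k²` translated copies of `Λ_{n,m}` into `Λ_{k(n+1),k(m+1)}`, separated by single empty rows
and columns, so that no site of one copy is adjacent to a site of another. Given a maximal
configuration on each copy, their union is independent; extend it by Zorn's lemma to a maximal
independent set `S` of the whole lattice. Since each configuration is maximal on its copy, `S`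
restricts to exactly that configuration on the copy, so the tuple of configurations can be read
off from the compatible configuration `S ∩ Λ_{k(n+1),k(m+1)}`.
-/

open scoped Pointwise

lemma TriAdj.symm {u v : ℤ × ℤ} (h : TriAdj u v) : TriAdj v u := by
  simp only [TriAdj, Finset.mem_insert, Finset.mem_singleton, Prod.mk.injEq] at h ⊢
  omega

lemma triAdj_irrefl (u : ℤ × ℤ) : ¬ TriAdj u u := by
  simp [TriAdj]

lemma TriAdj.abs_sub_le {u v : ℤ × ℤ} (h : TriAdj u v) :
    |u.1 - v.1| ≤ 1 ∧ |u.2 - v.2| ≤ 1 := by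
  simp only [TriAdj, Finset.mem_insert, Finset.mem_singleton, Prod.mk.injEq] at h
  constructor <;> rw [abs_le] <;> omega

@[simp]
lemma triAdj_add_left (c u v : ℤ × ℤ) : TriAdj (c + u) (c + v) ↔ TriAdj u v := by
  simp only [TriAdj, Prod.fst_add, Prod.snd_add, add_sub_add_left_eq_sub]

lemma IsIndependent.exists_isMIS_superset {U : Set (ℤ × ℤ)} (hU : IsIndependent U) :
    ∃ S, IsMIS S ∧ U ⊆ S := by
  obtain ⟨S, hUS, hS, hmax⟩ := zorn_subset_nonempty {S | IsIndependent S}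
    (fun c hc hchain _ => by
      refine ⟨⋃₀ c, ?_, fun s hs => Set.subset_sUnion_of_mem hs⟩
      rintro u ⟨s, hs, hus⟩ v ⟨t, ht, hvt⟩
      rcases hchain.total hs ht with hst | hts
      · exact hc ht u (hst hus) v hvt
      · exact hc hs u hus v (hts hvt)) U hU
  refine ⟨S, ⟨hS, fun u hu => ?_⟩, hUS⟩
  by_contra! hno
  have hind : IsIndependent (insert u S) := by
    rintro x (rfl | hx) y (rfl | hy)
    · exact triAdj_irrefl _
    · exact hno y hy
    · exact fun h => hno x hx h.symm
    · exact hS x hx y hy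
  exact hu (hmax hind (Set.subset_insert u S) (Set.mem_insert u S))

lemma IsMaxConfig.inter_eq_of_subset {Λ T S : Set (ℤ × ℤ)} (hT : IsMaxConfig Λ T)
    (hS : IsIndependent S) (hTS : T ⊆ S) : S ∩ Λ = T := by
  refine Set.Subset.antisymm (fun u ⟨huS, huΛ⟩ => ?_) (Set.subset_inter hTS hT.1)
  by_contra huT
  obtain ⟨v, hvT, huv⟩ := hT.2.2 u ⟨huΛ, huT⟩
  exact hS u huS v (hTS hvT) huv

lemma IsMaxConfig.vadd {Λ T : Set (ℤ × ℤ)} (hT : IsMaxConfig Λ T) (c : ℤ × ℤ) :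
    IsMaxConfig (c +ᵥ Λ) (c +ᵥ T) := by
  refine ⟨Set.vadd_set_mono hT.1, ?_, ?_⟩
  · rintro _ ⟨u, hu, rfl⟩ _ ⟨v, hv, rfl⟩
    simpa using hT.2.1 u hu v hv
  · rw [← Set.vadd_set_sdiff]
    rintro _ ⟨u, hu, rfl⟩
    obtain ⟨v, hv, huv⟩ := hT.2.2 u hu
    exact ⟨c + v, Set.vadd_mem_vadd_set hv, by simpa using huv⟩

lemma exists_isMIS_inter_eq {ι : Type*} {Λ T : ι → Set (ℤ × ℤ)}
    (hsep : ∀ i j, i ≠ j → ∀ u ∈ Λ i, ∀ v ∈ Λ j, ¬ TriAdj u v)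
    (hT : ∀ i, IsMaxConfig (Λ i) (T i)) :
    ∃ S, IsMIS S ∧ ∀ i, S ∩ Λ i = T i := by
  have hU : IsIndependent (⋃ i, T i) := by
    simp only [IsIndependent, Set.mem_iUnion]
    rintro u ⟨i, hu⟩ v ⟨j, hv⟩
    obtain rfl | hij := eq_or_ne i j
    · exact (hT i).2.1 u hu v hv
    · exact hsep i j hij u ((hT i).1 hu) v ((hT j).1 hv)
  obtain ⟨S, hS, hUS⟩ := hU.exists_isMIS_superset
  exact ⟨S, hS, fun i =>
    (hT i).inter_eq_of_subset hS.1 ((Set.subset_iUnion T i).trans hUS)⟩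

lemma compatConfigs_finite {Λ : Set (ℤ × ℤ)} (hΛ : Λ.Finite) : (CompatConfigs Λ).Finite :=
  hΛ.finite_subsets.subset (by rintro _ ⟨S, -, rfl⟩; exact Set.inter_subset_right)

theorem ncard_maxConfigs_pow_le {ι : Type*} [Finite ι] {Λ₀ Λ : Set (ℤ × ℤ)} (hΛ : Λ.Finite)
    (c : ι → ℤ × ℤ) (hsub : ∀ i, c i +ᵥ Λ₀ ⊆ Λ)
    (hsep : ∀ i j, i ≠ j → ∀ u ∈ c i +ᵥ Λ₀, ∀ v ∈ c j +ᵥ Λ₀, ¬ TriAdj u v) :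
    (MaxConfigs Λ₀).ncard ^ Nat.card ι ≤ (CompatConfigs Λ).ncard := by
  have : Finite (CompatConfigs Λ) := (compatConfigs_finite hΛ).to_subtype
  have hglue : ∀ t : ι → MaxConfigs Λ₀,
      ∃ S, IsMIS S ∧ ∀ i, S ∩ (c i +ᵥ Λ₀) = c i +ᵥ (t i).1 :=
    fun t => exists_isMIS_inter_eq hsep fun i => (t i).2.vadd (c i)
  choose S hS hrestrict using hglue
  let F : (ι → MaxConfigs Λ₀) → CompatConfigs Λ := fun t => ⟨S t ∩ Λ, S t, hS t, rfl⟩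
  have hF : Function.Injective F := by
    intro t t' h
    funext i
    have hSΛ : ∀ t, S t ∩ Λ ∩ (c i +ᵥ Λ₀) = c i +ᵥ (t i).1 := fun t => by
      rw [Set.inter_assoc, Set.inter_eq_right.2 (hsub i), hrestrict]
    have h' := hSΛ t
    rw [show S t ∩ Λ = S t' ∩ Λ from congrArg Subtype.val h, hSΛ t'] at h'
    exact Subtype.ext (AddAction.injective (c i) h'.symm)
  simpa [Nat.card_fun, Nat.card_coe_set_eq] using Nat.card_le_card_of_injective F hF

lemma rect_finite (n m : ℤ) : (Rect n m).Finite :=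
  ((Set.finite_Icc 1 n).prod (Set.finite_Icc 1 m)).subset
    fun _ ⟨h₁, h₂, h₃, h₄⟩ => ⟨⟨h₁, h₂⟩, ⟨h₃, h₄⟩⟩

lemma mem_vadd_rect {c p : ℤ × ℤ} {n m : ℤ} :
    p ∈ c +ᵥ Rect n m ↔ 1 ≤ p.1 - c.1 ∧ p.1 - c.1 ≤ n ∧ 1 ≤ p.2 - c.2 ∧ p.2 - c.2 ≤ m := by
  rw [Set.mem_vadd_set_iff_neg_vadd_mem]
  simp only [Rect, Box, Set.mem_ofPred_eq, vadd_eq_add, neg_add_eq_sub, Prod.fst_sub,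
    Prod.snd_sub]

lemma eq_of_abs_sub_le_one {n a b x y : ℤ}
    (hx : 1 ≤ x - a * (n + 1) ∧ x - a * (n + 1) ≤ n)
    (hy : 1 ≤ y - b * (n + 1) ∧ y - b * (n + 1) ≤ n) (h : |x - y| ≤ 1) : a = b := by
  rw [abs_le] at h
  have hn : (0 : ℤ) ≤ n + 1 := by omega
  rcases lt_trichotomy a b with hab | rfl | hab
  · nlinarith [mul_le_mul_of_nonneg_right (show a + 1 ≤ b by omega) hn]
  · rfl
  · nlinarith [mul_le_mul_of_nonneg_right (show b + 1 ≤ a by omega) hn]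

def blockOffset (n m : ℤ) {k : ℕ} (ij : Fin k × Fin k) : ℤ × ℤ :=
  ((ij.1 : ℤ) * (n + 1), (ij.2 : ℤ) * (m + 1))

lemma vadd_rect_subset_rect (n m : ℤ) {k : ℕ} (ij : Fin k × Fin k) :
    blockOffset n m ij +ᵥ Rect n m ⊆ Rect (k * (n + 1)) (k * (m + 1)) := by
  intro p hp
  obtain ⟨h₁, h₂, h₃, h₄⟩ := mem_vadd_rect.1 hp
  simp only [blockOffset] at h₁ h₂ h₃ h₄
  have hi : (ij.1 : ℤ) + 1 ≤ k := by have := ij.1.isLt; omega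
  have hj : (ij.2 : ℤ) + 1 ≤ k := by have := ij.2.isLt; omega
  refine ⟨by nlinarith, ?_, by nlinarith, ?_⟩
  · nlinarith [mul_le_mul_of_nonneg_right hi (by omega : (0 : ℤ) ≤ n + 1)]
  · nlinarith [mul_le_mul_of_nonneg_right hj (by omega : (0 : ℤ) ≤ m + 1)]

lemma not_triAdj_of_mem_vadd_rect (n m : ℤ) {k : ℕ} {ij ij' : Fin k × Fin k} (h : ij ≠ ij')
    {u v : ℤ × ℤ} (hu : u ∈ blockOffset n m ij +ᵥ Rect n m)
    (hv : v ∈ blockOffset n m ij' +ᵥ Rect n m) : ¬ TriAdj u v := by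
  intro huv
  obtain ⟨hu₁, hu₂, hu₃, hu₄⟩ := mem_vadd_rect.1 hu
  obtain ⟨hv₁, hv₂, hv₃, hv₄⟩ := mem_vadd_rect.1 hv
  obtain ⟨hd₁, hd₂⟩ := huv.abs_sub_le
  have hi := eq_of_abs_sub_le_one ⟨hu₁, hu₂⟩ ⟨hv₁, hv₂⟩ hd₁
  have hj := eq_of_abs_sub_le_one ⟨hu₃, hu₄⟩ ⟨hv₃, hv₄⟩ hd₂
  exact h (Prod.ext (Fin.ext (by exact_mod_cast hi)) (Fin.ext (by exact_mod_cast hj)))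

theorem compat_block_lower_bound_general (n m : ℤ)
    (k : ℕ) :
    (MaxConfigs (Rect n m)).ncard ^ (k ^ 2) ≤
      (CompatConfigs (Rect ((k : ℤ) * (n + 1)) ((k : ℤ) * (m + 1)))).ncard := by
  have hcard : Nat.card (Fin k × Fin k) = k ^ 2 := by simp [sq]
  rw [← hcard]
  exact ncard_maxConfigs_pow_le (rect_finite _ _) (blockOffset n m) (vadd_rect_subset_rect n m)
    fun _ _ h _ hu _ hv => not_triAdj_of_mem_vadd_rect n m h hu hv

/-- Block-tiling lower bound: the number of compatible configurations on
`Λ_{k(n+1),k(m+1)}` is at least `|M_{Λ_{n,m}}|^{k²}`. -/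
theorem compat_block_lower_bound (n m : ℤ) (hn : 1 ≤ n) (hm : 1 ≤ m)
    (k : ℕ) (hk : 1 ≤ k) :
    (MaxConfigs (Rect n m)).ncard ^ (k ^ 2) ≤
      (CompatConfigs (Rect ((k : ℤ) * (n + 1)) ((k : ℤ) * (m + 1)))).ncard :=
  compat_block_lower_bound_general n m k
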